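/- arXiv:2501.18267 — 2 statements merged into one kernel-verified Lean document; each statement's English description precedes it below -/
import Mathlib

section
/- In the group G'(D̃₄^{(1,1)}), every generator tᵢ can be expressed in terms of t₀, t₁ and their inverses: for every k ∈ ℤ one has t_{2k} = (t₁t₀)^k · t₀ · (t₁t₀)^{-k} and t_{2k+1} = (t₁t₀)^k · t₁ · (t₁t₀)^{-k}. -/
/-!
Relation (R3) says `t_{i+1} t_i = t₁t₀ =: c` for every `i`, so `t_{i+1} = c t_i⁻¹` and hence
`t_{i+2} = c t_i c⁻¹`. Iterating this conjugation in both directions from `t₀` and from `t₁`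
gives the formulas.
-/

namespace EllipticD4

abbrev GenG' : Type := ℤ ⊕ Fin 4

def tG' (i : ℤ) : FreeGroup GenG' := FreeGroup.of (Sum.inl i)
def sG' (j : Fin 4) : FreeGroup GenG' := FreeGroup.of (Sum.inr j)

/-- Relators of the new presentation of `G'(D̃₄^{(1,1)})`. -/
def relsG' : Set (FreeGroup GenG') :=
  { r | (∃ i j, r = (tG' i * sG' j * tG' i)⁻¹ * (sG' j * tG' i * sG' j)) ∨
        (∃ i j, i ≠ j ∧ r = (sG' i * sG' j)⁻¹ * (sG' j * sG' i)) ∨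
        (∃ i j : ℤ, r = (tG' i * tG' (i - 1))⁻¹ * (tG' j * tG' (j - 1))) }

/-- The image of the generator `tᵢ` in `G'(D̃₄^{(1,1)})`. -/
def t (i : ℤ) : PresentedGroup relsG' := PresentedGroup.of (Sum.inl i)

theorem eq_zpow_mul_mul_zpow_neg_of_add_one {G : Type*} [Group G] (c : G) (f : ℤ → G)
    (hf : ∀ n, f (n + 1) = c * f n * c⁻¹) (n : ℤ) : f n = c ^ n * f 0 * c ^ (-n) := by
  induction n using Int.induction_on with
  | zero => simp
  | succ n ih => rw [hf, ih]; group
  | pred n ih =>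
    have h := hf (-n - 1)
    rw [sub_add_cancel, ih] at h
    apply mul_left_cancel (a := c)
    apply mul_right_cancel (b := c⁻¹)
    rw [← h]
    group

theorem t_mul_t_sub_one (i : ℤ) : t i * t (i - 1) = t 1 * t 0 :=
  PresentedGroup.mk_eq_mk_of_inv_mul_mem (Or.inr (Or.inr ⟨i, 1, rfl⟩))

theorem t_add_two (n : ℤ) : t (n + 2) = (t 1 * t 0) * t n * (t 1 * t 0)⁻¹ := by
  have h₂ : t (n + 2) * t (n + 1) = t 1 * t 0 := by
    simpa [add_sub_assoc] using t_mul_t_sub_one (n + 2)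
  have h₁ : t (n + 1) * t n = t 1 * t 0 := by
    simpa using t_mul_t_sub_one (n + 1)
  calc t (n + 2) = (t 1 * t 0) * (t (n + 1))⁻¹ := eq_mul_inv_of_mul_eq h₂
    _ = (t 1 * t 0) * ((t 1 * t 0) * (t n)⁻¹)⁻¹ := by rw [eq_mul_inv_of_mul_eq h₁]
    _ = (t 1 * t 0) * t n * (t 1 * t 0)⁻¹ := by group

theorem t_in_terms_of_t0_t1 (k : ℤ) :
    t (2 * k) = (t 1 * t 0) ^ k * t 0 * (t 1 * t 0) ^ (-k) ∧
    t (2 * k + 1) = (t 1 * t 0) ^ k * t 1 * (t 1 * t 0) ^ (-k) := by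
  constructor
  · refine eq_zpow_mul_mul_zpow_neg_of_add_one _ (fun m ↦ t (2 * m)) (fun m ↦ ?_) k
    rw [mul_add_one, t_add_two]
  · refine eq_zpow_mul_mul_zpow_neg_of_add_one _ (fun m ↦ t (2 * m + 1)) (fun m ↦ ?_) k
    rw [mul_add_one, add_right_comm, t_add_two]

end EllipticD4
end

section
/- The group obtained from the presentation of G(Ẽ₈^{(1,1)}) by adding the quadratic relations g² = 1 for every generator t₀, t₁, s₁, …, s₈ is isomorphic to the group obtained from the presentation of G'(Ẽ₈^{(1,1)}) by adding the quadratic relations tᵢ² = 1 for all i ∈ ℤ and sⱼ² = 1 for j ∈ {1,…,8} (both present the hyperbolic elliptic Weyl group Hyp(Ẽ₈^{(1,1)})). -/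
/-!
STATEMENT 11: The group obtained from the presentation of G(Ẽ₈^{(1,1)}) by adding the
quadratic relations g² = 1 for every generator is isomorphic to the group obtained
from the presentation of G'(Ẽ₈^{(1,1)}) by adding the quadratic relations tᵢ² = 1
(i ∈ ℤ) and sⱼ² = 1; both present Hyp(Ẽ₈^{(1,1)}).
-/

namespace EllipticE8Hyp

/-- Generators of `G(Ẽ₈^{(1,1)})`: `Sum.inl i` is `tᵢ` (`i ∈ {0,1}`),
`Sum.inr j` is `s_(j+1)` (so `Sum.inr 0` is `s₁`, ..., `Sum.inr 7` is `s₈`). -/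
abbrev GenG : Type := Fin 2 ⊕ Fin 8

/-- Generators of `G'(Ẽ₈^{(1,1)})`: `Sum.inl i` is `tᵢ` (`i ∈ ℤ`),
`Sum.inr j` is `s_(j+1)`. -/
abbrev GenG' : Type := ℤ ⊕ Fin 8

/-- The braid relator `(aba)⁻¹(bab)` encoding the relation `aba = bab`. -/
def br {α : Type} (a b : FreeGroup α) : FreeGroup α := (a * b * a)⁻¹ * (b * a * b)

/-- The commutation relator `(ab)⁻¹(ba)` encoding the relation `ab = ba`. -/
def cm {α : Type} (a b : FreeGroup α) : FreeGroup α := (a * b)⁻¹ * (b * a)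

/-- The pairs of (0-indexed) `s`-generators joined by an edge in the diagram,
i.e. satisfying a braid relation: (s₂,s₄), (s₃,s₅), (s₅,s₆), (s₆,s₇), (s₇,s₈). -/
def braidPairs : List (Fin 8 × Fin 8) := [(1, 3), (2, 4), (4, 5), (5, 6), (6, 7)]

def tG (i : Fin 2) : FreeGroup GenG := FreeGroup.of (Sum.inl i)
def sG (j : Fin 8) : FreeGroup GenG := FreeGroup.of (Sum.inr j)

/-- Relators of the elliptic Dynkin presentation of `G(Ẽ₈^{(1,1)})`:
braid relations between `t₀, t₁` and `s₁, s₂, s₃`, braid relations along the edges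
of the `s`-part of the diagram, the elliptic relations for `s₁, s₂, s₃`, and
commutation relations for all remaining pairs of distinct generators except `{t₀,t₁}`. -/
def relsG : Set (FreeGroup GenG) :=
  { r | (∃ i : Fin 2, ∃ j : Fin 8, j.val < 3 ∧ r = br (tG i) (sG j)) ∨
        (∃ p ∈ braidPairs, r = br (sG p.1) (sG p.2)) ∨
        (∃ j : Fin 8, j.val < 3 ∧
          r = (sG j * tG 1 * tG 0 * sG j * tG 1 * tG 0)⁻¹ *
              (tG 1 * tG 0 * sG j * tG 1 * tG 0 * sG j)) ∨
        (∃ i j : Fin 8, i ≠ j ∧ (i, j) ∉ braidPairs ∧ (j, i) ∉ braidPairs ∧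
          r = cm (sG i) (sG j)) ∨
        (∃ i : Fin 2, ∃ j : Fin 8, 3 ≤ j.val ∧ r = cm (tG i) (sG j)) }

def tG' (i : ℤ) : FreeGroup GenG' := FreeGroup.of (Sum.inl i)
def sG' (j : Fin 8) : FreeGroup GenG' := FreeGroup.of (Sum.inr j)

/-- Relators of the new presentation of `G'(Ẽ₈^{(1,1)})`: braid relations between
every `tᵢ` (`i ∈ ℤ`) and `s₁, s₂, s₃`, the relations `tᵢtᵢ₋₁ = tⱼtⱼ₋₁`, braid relations
along the edges of the `s`-part of the diagram, commutation relations between the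
remaining pairs of distinct `s`-generators, and commutation of every `tᵢ` with
`s₄, …, s₈`. -/
def relsG' : Set (FreeGroup GenG') :=
  { r | (∃ i : ℤ, ∃ j : Fin 8, j.val < 3 ∧ r = br (tG' i) (sG' j)) ∨
        (∃ i j : ℤ, r = (tG' i * tG' (i - 1))⁻¹ * (tG' j * tG' (j - 1))) ∨
        (∃ p ∈ braidPairs, r = br (sG' p.1) (sG' p.2)) ∨
        (∃ i j : Fin 8, i ≠ j ∧ (i, j) ∉ braidPairs ∧ (j, i) ∉ braidPairs ∧
          r = cm (sG' i) (sG' j)) ∨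
        (∃ i : ℤ, ∃ j : Fin 8, 3 ≤ j.val ∧ r = cm (tG' i) (sG' j)) }

/-- Relators of the `G`-presentation together with the quadratic relators `g² = 1`
for every generator. -/
def relsHypG : Set (FreeGroup GenG) :=
  relsG ∪ { r | ∃ x : GenG, r = (FreeGroup.of x) ^ 2 }

/-- Relators of the `G'`-presentation together with the quadratic relators `tᵢ² = 1`
for all `i ∈ ℤ` and `sⱼ² = 1` for all `j`. -/
def relsHypG' : Set (FreeGroup GenG') :=
  relsG' ∪ { r | ∃ x : GenG', r = (FreeGroup.of x) ^ 2 }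

end EllipticE8Hyp

/-!
Send `tᵢ ↦ tᵢ` (`i = 0, 1`) and `sⱼ ↦ sⱼ`. In `G'` the elliptic relation for `sⱼ` follows from
the braid relations of `sⱼ` with `t₀, t₁, t₂` and from `t₂t₁ = t₁t₀`.

Conversely send `tᵢ ↦ (t₁t₀)ⁱt₀`, the reflections of the infinite dihedral group generated by the
involutions `t₀, t₁`. Consecutive reflections multiply to `t₁t₀`, and
`tᵢ₊₂ = tᵢ₊₁tᵢtᵢ₊₁`, `tᵢ₋₁ = tᵢtᵢ₊₁tᵢ`. So the braid relations of `sⱼ` with `t₀, t₁` propagate to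
all `tᵢ` by a two-step induction in both directions; the elliptic relation is exactly what the
induction step needs. The two maps are mutually inverse because in `G'` the relation
`tᵢ₊₁tᵢ = t₁t₀` forces `tᵢ = (t₁t₀)ⁱt₀`.
-/

theorem Int.induction_on_two_step {P : ℤ → Prop} (zero : P 0) (one : P 1)
    (up : ∀ i, P i → P (i + 1) → P (i + 2)) (down : ∀ i, P i → P (i + 1) → P (i - 1))
    (i : ℤ) : P i := by
  have pairs : ∀ i, P i ∧ P (i + 1) := by
    intro i
    induction i using Int.induction_on with
    | zero => exact ⟨zero, by simpa using one⟩
    | succ i ih => exact ⟨ih.2, by simpa [add_assoc, one_add_one_eq_two] using up i ih.1 ih.2⟩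
    | pred i ih => exact ⟨down _ ih.1 ih.2, by simpa using ih.1⟩
  exact (pairs i).1

section Braid

variable {G H : Type*} [Group G] [Group H]

theorem elliptic_of_braid {s t₀ t₁ t₂ : G} (h₀ : s * t₀ * s = t₀ * s * t₀)
    (h₁ : s * t₁ * s = t₁ * s * t₁) (h₂ : s * t₂ * s = t₂ * s * t₂) (hc : t₂ * t₁ = t₁ * t₀) :
    s * (t₁ * t₀) * s * (t₁ * t₀) = t₁ * t₀ * s * (t₁ * t₀) * s :=
  calc s * (t₁ * t₀) * s * (t₁ * t₀)
      = s * t₂ * (t₁ * s * t₁) * t₀ := by nth_rw 1 [← hc]; group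
    _ = (s * t₂ * s) * t₁ * s * t₀ := by rw [← h₁]; group
    _ = t₂ * s * (t₂ * t₁) * s * t₀ := by rw [h₂]; group
    _ = t₂ * s * t₁ * (t₀ * s * t₀) := by rw [hc]; group
    _ = t₂ * (s * t₁ * s) * t₀ * s := by rw [← h₀]; group
    _ = (t₂ * t₁) * s * t₁ * t₀ * s := by rw [h₁]; group
    _ = t₁ * t₀ * s * (t₁ * t₀) * s := by rw [hc]; group

theorem braid_mul_mul_of_elliptic {s u v : G} (hu : u * u = 1) (hv : v * v = 1)
    (bu : s * u * s = u * s * u) (bv : s * v * s = v * s * v)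
    (he : s * (v * u) * s * (v * u) = v * u * s * (v * u) * s) :
    s * (v * u * v) * s = v * u * v * s * (v * u * v) :=
  calc s * (v * u * v) * s
      = s * (v * u * v) * s * (v * v) := by rw [hv, mul_one]
    _ = s * v * u * (s * v * s) * v := by rw [bv]; group
    _ = s * v * u * s * v * (u * u) * s * v := by rw [hu]; group
    _ = v * u * s * (v * u) * s * u * s * v := by rw [← he]; group
    _ = v * u * s * v * u * (u * s * u) * v := by rw [← bu]; group
    _ = v * u * s * v * (u * u) * s * u * v := by group
    _ = v * u * (v * s * v) * u * v := by rw [hu, ← bv]; group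
    _ = v * u * v * s * (v * u * v) := by group

theorem elliptic_inv {s c : G} (hs : s * s = 1)
    (he : s * c * s * c = c * s * c * s) : s * c⁻¹ * s * c⁻¹ = c⁻¹ * s * c⁻¹ * s := by
  have hs' : s⁻¹ = s := inv_eq_of_mul_eq_one_right hs
  simpa [mul_assoc, hs'] using congrArg (·⁻¹) he.symm

def dihedralReflection (t₀ t₁ : G) (i : ℤ) : G := (t₁ * t₀) ^ i * t₀

variable {t₀ t₁ : G}

@[simp] theorem dihedralReflection_zero : dihedralReflection t₀ t₁ 0 = t₀ := by
  simp [dihedralReflection]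

theorem dihedralReflection_one (h₀ : t₀ * t₀ = 1) : dihedralReflection t₀ t₁ 1 = t₁ := by
  simp [dihedralReflection, mul_assoc, h₀]

theorem map_dihedralReflection (f : G →* H) (i : ℤ) :
    f (dihedralReflection t₀ t₁ i) = dihedralReflection (f t₀) (f t₁) i := by
  simp [dihedralReflection]

theorem commute_dihedralReflection {x : G} (h₀ : Commute x t₀) (h₁ : Commute x t₁) (i : ℤ) :
    Commute x (dihedralReflection t₀ t₁ i) :=
  ((h₁.mul_right h₀).zpow_right i).mul_right h₀

theorem mul_zpow_mul_of_involutions (h₀ : t₀ * t₀ = 1) (h₁ : t₁ * t₁ = 1) (k : ℤ) :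
    t₀ * (t₁ * t₀) ^ k * t₀ = (t₁ * t₀) ^ (-k) := by
  have h₀' : t₀⁻¹ = t₀ := inv_eq_of_mul_eq_one_right h₀
  have h₁' : t₁⁻¹ = t₁ := inv_eq_of_mul_eq_one_right h₁
  have conj : t₀ * (t₁ * t₀) * t₀⁻¹ = (t₁ * t₀)⁻¹ := by
    simp only [mul_inv_rev, h₀', h₁', mul_assoc, h₀, mul_one]
  calc t₀ * (t₁ * t₀) ^ k * t₀ = (t₀ * (t₁ * t₀) * t₀⁻¹) ^ k := by rw [conj_zpow, h₀']
    _ = (t₁ * t₀) ^ (-k) := by rw [conj, inv_zpow']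

theorem dihedralReflection_mul_self (h₀ : t₀ * t₀ = 1) (h₁ : t₁ * t₁ = 1) (i : ℤ) :
    dihedralReflection t₀ t₁ i * dihedralReflection t₀ t₁ i = 1 :=
  calc (t₁ * t₀) ^ i * t₀ * ((t₁ * t₀) ^ i * t₀)
      = (t₁ * t₀) ^ i * (t₀ * (t₁ * t₀) ^ i * t₀) := by group
    _ = 1 := by rw [mul_zpow_mul_of_involutions h₀ h₁]; group

theorem dihedralReflection_add_one_mul (h₀ : t₀ * t₀ = 1) (h₁ : t₁ * t₁ = 1) (i : ℤ) :
    dihedralReflection t₀ t₁ (i + 1) * dihedralReflection t₀ t₁ i = t₁ * t₀ :=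
  calc (t₁ * t₀) ^ (i + 1) * t₀ * ((t₁ * t₀) ^ i * t₀)
      = (t₁ * t₀) ^ (i + 1) * (t₀ * (t₁ * t₀) ^ i * t₀) := by group
    _ = t₁ * t₀ := by rw [mul_zpow_mul_of_involutions h₀ h₁]; group

theorem dihedralReflection_mul_add_one (h₀ : t₀ * t₀ = 1) (h₁ : t₁ * t₁ = 1) (i : ℤ) :
    dihedralReflection t₀ t₁ i * dihedralReflection t₀ t₁ (i + 1) = (t₁ * t₀)⁻¹ := by
  have inv_self (k : ℤ) : (dihedralReflection t₀ t₁ k)⁻¹ = dihedralReflection t₀ t₁ k :=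
    inv_eq_of_mul_eq_one_right (dihedralReflection_mul_self h₀ h₁ k)
  rw [← dihedralReflection_add_one_mul h₀ h₁, mul_inv_rev, inv_self, inv_self]

theorem dihedralReflection_add_two (h₀ : t₀ * t₀ = 1) (h₁ : t₁ * t₁ = 1) (i : ℤ) :
    dihedralReflection t₀ t₁ (i + 1) * dihedralReflection t₀ t₁ i *
      dihedralReflection t₀ t₁ (i + 1) = dihedralReflection t₀ t₁ (i + 2) := by
  rw [dihedralReflection_add_one_mul h₀ h₁, dihedralReflection, dihedralReflection]
  group

theorem dihedralReflection_sub_one (h₀ : t₀ * t₀ = 1) (h₁ : t₁ * t₁ = 1) (i : ℤ) :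
    dihedralReflection t₀ t₁ i * dihedralReflection t₀ t₁ (i + 1) *
      dihedralReflection t₀ t₁ i = dihedralReflection t₀ t₁ (i - 1) := by
  rw [dihedralReflection_mul_add_one h₀ h₁, dihedralReflection, dihedralReflection]
  generalize t₁ * t₀ = c
  group

theorem braid_dihedralReflection {s : G} (hs : s * s = 1) (h₀ : t₀ * t₀ = 1) (h₁ : t₁ * t₁ = 1)
    (b₀ : s * t₀ * s = t₀ * s * t₀) (b₁ : s * t₁ * s = t₁ * s * t₁)
    (he : s * (t₁ * t₀) * s * (t₁ * t₀) = t₁ * t₀ * s * (t₁ * t₀) * s) (i : ℤ) :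
    s * dihedralReflection t₀ t₁ i * s =
      dihedralReflection t₀ t₁ i * s * dihedralReflection t₀ t₁ i := by
  induction i using Int.induction_on_two_step with
  | zero => simpa using b₀
  | one => rwa [dihedralReflection_one h₀]
  | up i b b' =>
    rw [← dihedralReflection_add_two h₀ h₁]
    refine braid_mul_mul_of_elliptic (dihedralReflection_mul_self h₀ h₁ _)
      (dihedralReflection_mul_self h₀ h₁ _) b b' ?_
    rwa [dihedralReflection_add_one_mul h₀ h₁]
  | down i b b' =>
    rw [← dihedralReflection_sub_one h₀ h₁]
    refine braid_mul_mul_of_elliptic (dihedralReflection_mul_self h₀ h₁ _)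
      (dihedralReflection_mul_self h₀ h₁ _) b' b ?_
    rw [dihedralReflection_mul_add_one h₀ h₁]
    exact elliptic_inv hs he

theorem eq_dihedralReflection {t : ℤ → G} (ht : ∀ i, t i * t i = 1)
    (hc : ∀ i, t (i + 1) * t i = t 1 * t 0) (i : ℤ) : t i = dihedralReflection (t 0) (t 1) i := by
  have step (i : ℤ) : t (i + 1) = t 1 * t 0 * t i := by
    rw [← hc i, mul_assoc, ht, mul_one]
  induction i using Int.induction_on with
  | zero => simp
  | succ i ih =>
    rw [step, ih, dihedralReflection, dihedralReflection]
    generalize t 1 * t 0 = c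
    group
  | pred i ih =>
    rw [← sub_add_cancel (-(i : ℤ)) 1, step] at ih
    rw [dihedralReflection, ← mul_right_inj (t 1 * t 0), ih, dihedralReflection]
    generalize t 1 * t 0 = c
    group

end Braid

namespace EllipticE8Hyp

section Relators

variable {α : Type} {G : Type*} [Group G]

theorem map_br_eq_one_iff (f : FreeGroup α →* G) (a b : FreeGroup α) :
    f (br a b) = 1 ↔ f a * f b * f a = f b * f a * f b := by
  simp only [br, map_mul, map_inv, inv_mul_eq_one]

theorem map_cm_eq_one_iff (f : FreeGroup α →* G) (a b : FreeGroup α) :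
    f (cm a b) = 1 ↔ Commute (f a) (f b) := by
  simp only [cm, map_mul, map_inv, inv_mul_eq_one]
  rfl

theorem map_of_sq_eq_one_iff (f : FreeGroup α →* G) (x : α) :
    f (FreeGroup.of x ^ 2) = 1 ↔ f (FreeGroup.of x) * f (FreeGroup.of x) = 1 := by
  rw [map_pow, sq]

end Relators

abbrev Hyp : Type := PresentedGroup relsHypG
abbrev Hyp' : Type := PresentedGroup relsHypG'

namespace Hyp

def t (i : Fin 2) : Hyp := PresentedGroup.of (Sum.inl i)
def s (j : Fin 8) : Hyp := PresentedGroup.of (Sum.inr j)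

theorem t_mul_self (i : Fin 2) : t i * t i = 1 :=
  (map_of_sq_eq_one_iff _ _).1 (PresentedGroup.one_of_mem (Or.inr ⟨.inl i, rfl⟩))

theorem s_mul_self (j : Fin 8) : s j * s j = 1 :=
  (map_of_sq_eq_one_iff _ _).1 (PresentedGroup.one_of_mem (Or.inr ⟨.inr j, rfl⟩))

theorem braid_t_s (i : Fin 2) (j : Fin 8) (hj : j.val < 3) : t i * s j * t i = s j * t i * s j :=
  (map_br_eq_one_iff _ _ _).1 (PresentedGroup.one_of_mem (Or.inl (Or.inl ⟨i, j, hj, rfl⟩)))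

theorem braid_s_s (p : Fin 8 × Fin 8) (hp : p ∈ braidPairs) :
    s p.1 * s p.2 * s p.1 = s p.2 * s p.1 * s p.2 :=
  (map_br_eq_one_iff _ _ _).1 (PresentedGroup.one_of_mem (Or.inl (Or.inr (Or.inl ⟨p, hp, rfl⟩))))

theorem elliptic (j : Fin 8) (hj : j.val < 3) :
    s j * (t 1 * t 0) * s j * (t 1 * t 0) = t 1 * t 0 * s j * (t 1 * t 0) * s j := by
  have h : s j * t 1 * t 0 * s j * t 1 * t 0 = t 1 * t 0 * s j * t 1 * t 0 * s j := by
    have := PresentedGroup.one_of_mem (rels := relsHypG)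
      (Or.inl (Or.inr (Or.inr (Or.inl ⟨j, hj, rfl⟩))))
    simp only [map_mul, map_inv, inv_mul_eq_one] at this
    exact this
  simpa only [mul_assoc] using h

theorem commute_s_s (i j : Fin 8) (hij : i ≠ j) (h₁ : (i, j) ∉ braidPairs)
    (h₂ : (j, i) ∉ braidPairs) : Commute (s i) (s j) :=
  (map_cm_eq_one_iff _ _ _).1 (PresentedGroup.one_of_mem
    (Or.inl (Or.inr (Or.inr (Or.inr (Or.inl ⟨i, j, hij, h₁, h₂, rfl⟩))))))

theorem commute_t_s (i : Fin 2) (j : Fin 8) (hj : 3 ≤ j.val) : Commute (t i) (s j) :=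
  (map_cm_eq_one_iff _ _ _).1 (PresentedGroup.one_of_mem
    (Or.inl (Or.inr (Or.inr (Or.inr (Or.inr ⟨i, j, hj, rfl⟩))))))

end Hyp

namespace Hyp'

def t (i : ℤ) : Hyp' := PresentedGroup.of (Sum.inl i)
def s (j : Fin 8) : Hyp' := PresentedGroup.of (Sum.inr j)

theorem t_mul_self (i : ℤ) : t i * t i = 1 :=
  (map_of_sq_eq_one_iff _ _).1 (PresentedGroup.one_of_mem (Or.inr ⟨.inl i, rfl⟩))

theorem s_mul_self (j : Fin 8) : s j * s j = 1 :=
  (map_of_sq_eq_one_iff _ _).1 (PresentedGroup.one_of_mem (Or.inr ⟨.inr j, rfl⟩))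

theorem braid_t_s (i : ℤ) (j : Fin 8) (hj : j.val < 3) : t i * s j * t i = s j * t i * s j :=
  (map_br_eq_one_iff _ _ _).1 (PresentedGroup.one_of_mem (Or.inl (Or.inl ⟨i, j, hj, rfl⟩)))

theorem t_mul_t_sub_one (i j : ℤ) : t i * t (i - 1) = t j * t (j - 1) := by
  have := PresentedGroup.one_of_mem (rels := relsHypG') (Or.inl (Or.inr (Or.inl ⟨i, j, rfl⟩)))
  simp only [map_mul, map_inv, inv_mul_eq_one] at this
  exact this

theorem t_add_one_mul (i : ℤ) : t (i + 1) * t i = t 1 * t 0 := by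
  simpa using t_mul_t_sub_one (i + 1) 1

theorem braid_s_s (p : Fin 8 × Fin 8) (hp : p ∈ braidPairs) :
    s p.1 * s p.2 * s p.1 = s p.2 * s p.1 * s p.2 :=
  (map_br_eq_one_iff _ _ _).1
    (PresentedGroup.one_of_mem (Or.inl (Or.inr (Or.inr (Or.inl ⟨p, hp, rfl⟩)))))

theorem commute_s_s (i j : Fin 8) (hij : i ≠ j) (h₁ : (i, j) ∉ braidPairs)
    (h₂ : (j, i) ∉ braidPairs) : Commute (s i) (s j) :=
  (map_cm_eq_one_iff _ _ _).1 (PresentedGroup.one_of_mem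
    (Or.inl (Or.inr (Or.inr (Or.inr (Or.inl ⟨i, j, hij, h₁, h₂, rfl⟩))))))

theorem commute_t_s (i : ℤ) (j : Fin 8) (hj : 3 ≤ j.val) : Commute (t i) (s j) :=
  (map_cm_eq_one_iff _ _ _).1 (PresentedGroup.one_of_mem
    (Or.inl (Or.inr (Or.inr (Or.inr (Or.inr ⟨i, j, hj, rfl⟩))))))

theorem elliptic (j : Fin 8) (hj : j.val < 3) :
    s j * (t 1 * t 0) * s j * (t 1 * t 0) = t 1 * t 0 * s j * (t 1 * t 0) * s j :=
  elliptic_of_braid (braid_t_s 0 j hj).symm (braid_t_s 1 j hj).symm (braid_t_s 2 j hj).symm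
    (t_add_one_mul 1)

end Hyp'

theorem lift_eq_one_of_mem_relsHypG :
    ∀ r ∈ relsHypG, FreeGroup.lift (Sum.elim (fun i : Fin 2 => Hyp'.t (i : ℕ)) Hyp'.s) r = 1 := by
  rintro r ((⟨i, j, hj, rfl⟩ | ⟨p, hp, rfl⟩ | ⟨j, hj, rfl⟩ | ⟨i, j, hij, h₁, h₂, rfl⟩ |
    ⟨i, j, hj, rfl⟩) | ⟨i | j, rfl⟩) <;>
    simp only [map_br_eq_one_iff, map_cm_eq_one_iff, map_of_sq_eq_one_iff, map_mul, map_inv,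
      inv_mul_eq_one, tG, sG, FreeGroup.lift_apply_of, Sum.elim_inl, Sum.elim_inr]
  · exact Hyp'.braid_t_s _ j hj
  · exact Hyp'.braid_s_s p hp
  · simpa [mul_assoc] using Hyp'.elliptic j hj
  · exact Hyp'.commute_s_s i j hij h₁ h₂
  · exact Hyp'.commute_t_s _ j hj
  · exact Hyp'.t_mul_self _
  · exact Hyp'.s_mul_self j

theorem lift_eq_one_of_mem_relsHypG' :
    ∀ r ∈ relsHypG',
      FreeGroup.lift (Sum.elim (dihedralReflection (Hyp.t 0) (Hyp.t 1)) Hyp.s) r = 1 := by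
  have h₀ := Hyp.t_mul_self 0
  have h₁ := Hyp.t_mul_self 1
  rintro r ((⟨i, j, hj, rfl⟩ | ⟨i, j, rfl⟩ | ⟨p, hp, rfl⟩ | ⟨i, j, hij, hp₁, hp₂, rfl⟩ |
    ⟨i, j, hj, rfl⟩) | ⟨i | j, rfl⟩) <;>
    simp only [map_br_eq_one_iff, map_cm_eq_one_iff, map_of_sq_eq_one_iff, map_mul, map_inv,
      inv_mul_eq_one, tG', sG', FreeGroup.lift_apply_of, Sum.elim_inl, Sum.elim_inr]
  · exact (braid_dihedralReflection (Hyp.s_mul_self j) h₀ h₁ (Hyp.braid_t_s 0 j hj).symm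
      (Hyp.braid_t_s 1 j hj).symm (Hyp.elliptic j hj) i).symm
  · have (k : ℤ) := dihedralReflection_add_one_mul h₀ h₁ (k - 1)
    simp only [sub_add_cancel] at this
    rw [this, this]
  · exact Hyp.braid_s_s p hp
  · exact Hyp.commute_s_s i j hij hp₁ hp₂
  · exact (commute_dihedralReflection (Hyp.commute_t_s 0 j hj).symm
      (Hyp.commute_t_s 1 j hj).symm i).symm
  · exact dihedralReflection_mul_self h₀ h₁ i
  · exact Hyp.s_mul_self j

def toHyp' : Hyp →* Hyp' := PresentedGroup.toGroup lift_eq_one_of_mem_relsHypG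

def toHyp : Hyp' →* Hyp := PresentedGroup.toGroup lift_eq_one_of_mem_relsHypG'

@[simp] theorem toHyp'_t (i : Fin 2) : toHyp' (Hyp.t i) = Hyp'.t (i : ℕ) :=
  PresentedGroup.toGroup.of _

@[simp] theorem toHyp'_s (j : Fin 8) : toHyp' (Hyp.s j) = Hyp'.s j :=
  PresentedGroup.toGroup.of _

@[simp] theorem toHyp_t (i : ℤ) : toHyp (Hyp'.t i) = dihedralReflection (Hyp.t 0) (Hyp.t 1) i :=
  PresentedGroup.toGroup.of _

@[simp] theorem toHyp_s (j : Fin 8) : toHyp (Hyp'.s j) = Hyp.s j :=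
  PresentedGroup.toGroup.of _

theorem toHyp_comp_toHyp' : toHyp.comp toHyp' = MonoidHom.id Hyp := by
  refine PresentedGroup.ext ?_
  rintro (i | j)
  · change toHyp (toHyp' (Hyp.t i)) = Hyp.t i
    fin_cases i
    · simp
    · simpa using dihedralReflection_one (Hyp.t_mul_self 0)
  · change toHyp (toHyp' (Hyp.s j)) = Hyp.s j
    simp

theorem toHyp'_comp_toHyp : toHyp'.comp toHyp = MonoidHom.id Hyp' := by
  refine PresentedGroup.ext ?_
  rintro (i | j)
  · change toHyp' (toHyp (Hyp'.t i)) = Hyp'.t i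
    simp [map_dihedralReflection, ← eq_dihedralReflection Hyp'.t_mul_self Hyp'.t_add_one_mul]
  · change toHyp' (toHyp (Hyp'.s j)) = Hyp'.s j
    simp

theorem Hyp_iso : Nonempty (PresentedGroup relsHypG ≃* PresentedGroup relsHypG') :=
  ⟨MonoidHom.toMulEquiv toHyp' toHyp toHyp_comp_toHyp' toHyp'_comp_toHyp⟩

end EllipticE8Hyp
end
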